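/- arXiv:1702.08119 — 2 statements merged into one kernel-verified Lean document; each statement's English description precedes it below -/
import Mathlib

section
/- Let T be a simple broad poset (a commutative broad poset such that whenever e_1 ⋯ e_n ≤ e, the e_i are pairwise distinct). Then the descendant relation ≤_d on T, defined by f ≤_d e iff f appears in some tuple f̲ with f̲ ≤ e, is a partial order relation on T. -/
universe u

namespace BroadPaper

/-- A broad relation on `X`: a relation between finite unordered tuples
(multisets) over `X` and elements of `X`. -/
abbrev Rel (X : Type u) : Type u := Multiset X → X → Prop

variable {X : Type u} {Y : Type u} {A : Type u} {B : Type u} {Z : Type u}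

/-- Broad transitivity: if `f₁ ⋯ fₙ ≤ e` and `g̲ᵢ ≤ fᵢ` then `g̲₁ ⋯ g̲ₙ ≤ e`,
encoded via a multiset of pairs `(g̲ᵢ, fᵢ)`. -/
def BTrans (r : Rel X) : Prop :=
  ∀ (p : Multiset (Multiset X × X)) (e : X),
    r (p.map Prod.snd) e → (∀ q ∈ p, r q.1 q.2) → r ((p.map Prod.fst).sum) e

/-- A pre-broad poset: reflexivity plus broad transitivity. -/
def IsPreBroad (r : Rel X) : Prop := (∀ e : X, r {e} e) ∧ BTrans r

/-- A (commutative) broad poset: a pre-broad poset satisfying antisymmetry. -/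
def IsBroad (r : Rel X) : Prop :=
  IsPreBroad r ∧ ∀ e f : X, r {e} f → r {f} e → e = f

/-- Simplicity: letters in any broad relation are pairwise distinct. -/
def Simple (r : Rel X) : Prop := ∀ fs e, r fs e → fs.Nodup

/-- The descendant relation `f ≤_d e`. -/
def descends (r : Rel X) (f e : X) : Prop := ∃ fs, r fs e ∧ f ∈ fs

def Comparable (r : Rel X) (f g : X) : Prop := descends r f g ∨ descends r g f

def Incomp (r : Rel X) (f g : X) : Prop := ¬ descends r f g ∧ ¬ descends r g f

/-- Blockwise extension of a broad relation to a relation between tuples: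
`fs ≤ es` iff `fs = f̲₁ ⋯ f̲ₖ`, `es = e₁ ⋯ eₖ` with `f̲ᵢ ≤ eᵢ`. -/
def tupleLE (r : Rel X) (fs es : Multiset X) : Prop :=
  ∃ p : Multiset (Multiset X × X),
    p.map Prod.snd = es ∧ (p.map Prod.fst).sum = fs ∧ ∀ q ∈ p, r q.1 q.2

/-- A leaf: no tuple strictly below `e`. -/
def IsLeaf (r : Rel X) (e : X) : Prop := ¬ ∃ fs, r fs e ∧ fs ≠ ({e} : Multiset X)

/-- `fs` is the maximum tuple strictly below `e` (written `e^↑`).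
If `fs ≠ 0`, `e` is a node; if `fs = 0`, `e` is a stump. -/
def upTuple (r : Rel X) (e : X) (fs : Multiset X) : Prop :=
  (r fs e ∧ fs ≠ ({e} : Multiset X)) ∧
    ∀ gs, r gs e → gs ≠ ({e} : Multiset X) → tupleLE r gs fs

def IsStump (r : Rel X) (e : X) : Prop := upTuple r e 0

/-- A dendroidally ordered set (tree): a finite simple broad poset in which
every element is a leaf, node or stump, with a `≤_d`-maximum (root). -/
def IsTree (r : Rel X) : Prop :=
  IsBroad r ∧ Finite X ∧ Simple r ∧
    (∀ e : X, IsLeaf r e ∨ ∃ fs, upTuple r e fs) ∧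
    ∃ rt : X, ∀ e, descends r e rt

def IsMaxEl (r : Rel X) (e : X) : Prop := ∀ s, descends r e s → s = e

/-- A forestially ordered set (forest): each element has a unique
`≤_d`-maximal element above it. -/
def IsForest (r : Rel X) : Prop :=
  IsBroad r ∧ Finite X ∧ Simple r ∧
    (∀ e : X, IsLeaf r e ∨ ∃ fs, upTuple r e fs) ∧
    ∀ e : X, ∃! rt : X, IsMaxEl r rt ∧ descends r e rt

/-- A map of broad posets: preserves broad relations (letterwise on tuples). -/
def BroadHom (r : Rel X) (r' : Rel Y) (φ : X → Y) : Prop :=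
  ∀ fs e, r fs e → r' (fs.map φ) (φ e)

/-- `rs` is the root tuple: the tuple of `≤_d`-maximal elements (no repeats). -/
def IsRootTuple (r : Rel X) (rs : Multiset X) : Prop :=
  rs.Nodup ∧ ∀ x, x ∈ rs ↔ IsMaxEl r x

/-- Independent map of forests: `φ(r̲_F)·e̲ ≤ r̲_{F'}` for some tuple `e̲`. -/
def Independent (r : Rel X) (r' : Rel Y) (φ : X → Y) : Prop :=
  ∃ (rs : Multiset X) (rs' : Multiset Y) (es : Multiset Y),
    IsRootTuple r rs ∧ IsRootTuple r' rs' ∧ tupleLE r' (rs.map φ + es) rs'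

/-- The (pre-)broad relation generated by a set of generating relations:
closure under reflexivity and broad transitivity. -/
inductive GenRel (gen : Rel X) : Rel X
  | of : ∀ fs e, gen fs e → GenRel gen fs e
  | refl : ∀ e, GenRel gen {e} e
  | btrans : ∀ (p : Multiset (Multiset X × X)) (e : X),
      GenRel gen (p.map Prod.snd) e → (∀ q ∈ p, GenRel gen q.1 q.2) →
      GenRel gen ((p.map Prod.fst).sum) e

/-- Generators of the tensor product `S ⊗ T`: relations `s̲ × t ≤ (s,t)` and
`s × t̲ ≤ (s,t)`. -/
def tensorGen (rS : Rel A) (rT : Rel B) : Rel (A × B) := fun xs x =>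
  (∃ as, rS as x.1 ∧ xs = as.map fun a => (a, x.2)) ∨
  (∃ bs, rT bs x.2 ∧ xs = bs.map fun b => (x.1, b))

/-- The tensor product broad relation on `A × B`. -/
def tensorRel (rS : Rel A) (rT : Rel B) : Rel (A × B) := GenRel (tensorGen rS rT)

/-- Product of tuples: all pairs from `as` and `bs`. -/
def mprod (as : Multiset A) (bs : Multiset B) : Multiset (A × B) :=
  as.bind fun a => bs.map fun b => (a, b)

end BroadPaper

/-!
Substitution (if `f̲ ≤ e`, `f ∈ f̲` and `g̲ ≤ f`, then `g̲ · (f̲ ∖ f) ≤ e`) makes `≤_d`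
transitive. For antisymmetry, if `a ∈ f̲ ≤ b` and `b ∈ g̲ ≤ a`, substitution yields a relation
`g̲ · (f̲ ∖ a) ≤ b` whose tuple contains `b`; substituting that relation into itself at `b`
repeats its other letters, so simplicity forces it to be `b ≤ b`. Hence `f̲ = a` and likewise
`g̲ = b`, and antisymmetry of the broad poset gives `a = b`.
-/

namespace BroadPaper

variable {X : Type u} {r : Rel X}

theorem IsPreBroad.subst [DecidableEq X] (hr : IsPreBroad r) {fs gs : Multiset X} {e f : X}
    (hfe : r fs e) (hf : f ∈ fs) (hgf : r gs f) : r (gs + fs.erase f) e := by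
  -- graft `gs` onto the letter `f` and the identity `{x} ≤ x` onto every other letter
  let p : Multiset (Multiset X × X) := (gs, f) ::ₘ (fs.erase f).map fun x => ({x}, x)
  have hsnd : p.map Prod.snd = fs := by simp [p, Multiset.map_map, Multiset.cons_erase hf]
  have hfst : (p.map Prod.fst).sum = gs + fs.erase f := by simp [p, Multiset.map_map]
  rw [← hfst]
  refine hr.2 p e (hsnd ▸ hfe) fun q hq => ?_
  rcases Multiset.mem_cons.mp hq with rfl | hq
  · exact hgf
  · obtain ⟨x, -, rfl⟩ := Multiset.mem_map.mp hq
    exact hr.1 x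

theorem IsPreBroad.eq_singleton_of_mem [DecidableEq X] (hr : IsPreBroad r) (hs : Simple r)
    {es : Multiset X} {e : X} (h : r es e) (he : e ∈ es) : es = {e} := by
  have hdisj : Disjoint es (es.erase e) := (Multiset.nodup_add.mp (hs _ _ (hr.subst h he h))).2.2
  have herase : es.erase e = 0 := hdisj.eq_bot_of_ge (Multiset.erase_le e es)
  simpa [herase] using (Multiset.cons_erase he).symm

theorem IsPreBroad.eq_singleton_of_descends (hr : IsPreBroad r) (hs : Simple r)
    {fs : Multiset X} {a b : X} (hfs : r fs b) (ha : a ∈ fs) (hba : descends r b a) :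
    fs = {a} := by
  classical
  obtain ⟨gs, hgs, hb⟩ := hba
  have hsum : gs + fs.erase a = {b} :=
    hr.eq_singleton_of_mem hs (hr.subst hfs ha hgs) (Multiset.mem_add.mpr (Or.inl hb))
  have hcard := congrArg Multiset.card hsum
  rw [Multiset.card_add, Multiset.card_singleton] at hcard
  have herase : fs.erase a = 0 :=
    Multiset.card_eq_zero.mp (by have := Multiset.card_pos_iff_exists_mem.mpr ⟨b, hb⟩; omega)
  simpa [herase] using (Multiset.cons_erase ha).symm

theorem IsPreBroad.descends_refl (hr : IsPreBroad r) (e : X) : descends r e e :=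
  ⟨{e}, hr.1 e, Multiset.mem_singleton_self e⟩

theorem IsPreBroad.descends_trans (hr : IsPreBroad r) {a b c : X} (hab : descends r a b)
    (hbc : descends r b c) : descends r a c := by
  classical
  obtain ⟨fs, hfs, ha⟩ := hab
  obtain ⟨gs, hgs, hb⟩ := hbc
  exact ⟨fs + gs.erase b, hr.subst hgs hb hfs, Multiset.mem_add.mpr (Or.inl ha)⟩

theorem IsBroad.descends_antisymm (hr : IsBroad r) (hs : Simple r) {a b : X}
    (hab : descends r a b) (hba : descends r b a) : a = b := by
  obtain ⟨fs, hfs, ha⟩ := hab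
  obtain ⟨gs, hgs, hb⟩ := hba
  have hfs_eq := hr.1.eq_singleton_of_descends hs hfs ha ⟨gs, hgs, hb⟩
  have hgs_eq := hr.1.eq_singleton_of_descends hs hgs hb ⟨fs, hfs, ha⟩
  exact hr.2 a b (hfs_eq ▸ hfs) (hgs_eq ▸ hgs)

/-- For a simple broad poset, the descendant relation `≤_d`
is a partial order. -/
theorem stmt0 {X : Type u} (r : Rel X) (hb : IsBroad r) (hs : Simple r) :
    IsPartialOrder X (descends r) := by
  exact { refl := hb.1.descends_refl
          trans := fun _ _ _ => hb.1.descends_trans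
          antisymm := fun _ _ => hb.descends_antisymm hs }

end BroadPaper
end

section
/- Let T be a simple broad poset. If f_1 ⋯ f_k ≤ e is a broad relation, then the elements f_i are pairwise ≤_d-incomparable; in particular, a relation of the form e·f̲ ≤ e can hold only if f̲ = ε. -/
universe u

namespace BroadPaper

/-! If `f` and `g` are distinct letters of `f̲ ≤ e` and `g ∈ g̲ ≤ f`, substituting `g̲` for `f`
gives `g̲ · (f̲ ∖ f) ≤ e`, in which `g` occurs twice; simplicity forbids this. -/

variable {X : Type u} [DecidableEq X] {r : Rel X} {fs gs : Multiset X} {e f g : X}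

theorem IsPreBroad.rel_add_erase (hr : IsPreBroad r) (h : r fs e) (hf : f ∈ fs)
    (hgs : r gs f) : r (gs + fs.erase f) e := by
  let p : Multiset (Multiset X × X) := (gs, f) ::ₘ (fs.erase f).map fun x => ({x}, x)
  have hsnd : p.map Prod.snd = fs := by
    simp [p, Multiset.map_map, Multiset.cons_erase hf]
  have hfst : (p.map Prod.fst).sum = gs + fs.erase f := by
    simp [p, Multiset.map_map, Multiset.sum_map_singleton]
  have hrel : ∀ q ∈ p, r q.1 q.2 := by
    intro q hq
    rcases Multiset.mem_cons.mp hq with rfl | hq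
    · exact hgs
    · obtain ⟨x, -, rfl⟩ := Multiset.mem_map.mp hq
      exact hr.1 x
  simpa [hfst] using hr.2 p e (hsnd ▸ h) hrel

theorem IsPreBroad.not_descends_of_mem_erase (hr : IsPreBroad r)
    (hs : Simple r) (h : r fs e) (hf : f ∈ fs) (hg : g ∈ fs.erase f) : ¬ descends r g f := by
  rintro ⟨gs, hgs, hg'⟩
  have hnodup := Multiset.nodup_add.mp (hs _ _ (hr.rel_add_erase h hf hgs))
  exact Multiset.disjoint_left.mp hnodup.2.2 hg' hg

/-- In a simple broad poset, the letters of any broad relation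
`f₁ ⋯ fₖ ≤ e` are pairwise `≤_d`-incomparable; in particular `e·f̲ ≤ e`
forces `f̲ = ε`. -/
theorem stmt1 {X : Type u} (r : Rel X) (hb : IsBroad r) (hs : Simple r) :
    (∀ (fs : Multiset X) (e : X), r fs e → fs.Pairwise (Incomp r)) ∧
    (∀ (e : X) (fs : Multiset X), r (e ::ₘ fs) e → fs = 0) := by
  classical
  refine ⟨fun fs e h => ?_, fun e fs h => ?_⟩
  · have hnodup := hs _ _ h
    refine hnodup.pairwise fun a haf b hbf hab => ⟨?_, ?_⟩
    · exact hb.1.not_descends_of_mem_erase hs h hbf (hnodup.mem_erase_iff.mpr ⟨hab, haf⟩)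
    · exact hb.1.not_descends_of_mem_erase hs h haf (hnodup.mem_erase_iff.mpr ⟨hab.symm, hbf⟩)
  · refine Multiset.eq_zero_of_forall_notMem fun f hf => ?_
    have hf' : f ∈ (e ::ₘ fs).erase e := by rwa [Multiset.erase_cons_head]
    exact hb.1.not_descends_of_mem_erase hs h (Multiset.mem_cons_self e fs) hf'
      ⟨_, h, Multiset.mem_cons_of_mem hf⟩

end BroadPaper
end
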